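/- Let π be a probability measure supported on [a,b] with 0 < a < b < ∞, and let S_n = X₁ + ⋯ + X_n be the partial sums of i.i.d. variables X_i ∼ π. Fix an integer k ≥ 2 with k(b−a) ≥ b. Define C = kb − S_k and B = S_{k+1} − kb on the event {S_k ≤ kb < S_{k+1}}. Then the support of the law of (C, B) restricted to this event equals 𝒞 = {(u,v) ∈ [0,b]² : a ≤ u+v ≤ b}. -/

import Mathlib

open MeasureTheory ProbabilityTheory

/-
On the event, `C + B = X_k ∈ [a, b]` with `C ≥ 0` and `B > 0`, so the law of `(C, B)` lives on the
closed set `𝒞`. Conversely, a point `(u, v)` of `𝒞` with `u, v > 0` is the value of `(C, B)` at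
`X_0 = ⋯ = X_{k-1} = b - u / k`, `X_k = u + v`; the condition `k (b - a) ≥ b` puts `b - u / k` in
`[a, b]`, so by independence every box around this configuration has positive probability. Such
points are dense in `𝒞`, and the support is closed.
-/

open Set Finset Topology

lemma MeasureTheory.Measure.setOf_forall_nhds_ne_zero {X : Type*} [TopologicalSpace X]
    [MeasurableSpace X] (ν : Measure X) :
    {x : X | ∀ U ∈ 𝓝 x, ν U ≠ 0} = ν.support := by
  ext x
  simp only [mem_ofPred_eq, Measure.mem_support_iff_forall, pos_iff_ne_zero]

lemma ProbabilityTheory.iIndepFun.measure_biInter_preimage_pos {Ω ι β : Type*}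
    {m : MeasurableSpace Ω} {μ : Measure Ω} [TopologicalSpace β] [MeasurableSpace β]
    [OpensMeasurableSpace β] {X : ι → Ω → β} (hX : iIndepFun X μ) (hXm : ∀ i, Measurable (X i))
    (s : Finset ι) {A : ι → Set β} (hA : ∀ i, IsOpen (A i))
    (hA_supp : ∀ i ∈ s, (A i ∩ (μ.map (X i)).support).Nonempty) :
    0 < μ (⋂ i ∈ s, X i ⁻¹' A i) := by
  rw [hX.meas_biInter fun i _ => ⟨A i, (hA i).measurableSet, rfl⟩,
    CanonicallyOrderedAdd.prod_pos]
  intro i hi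
  obtain ⟨y, hyA, hy⟩ := hA_supp i hi
  rw [← Measure.map_apply (hXm i) (hA i).measurableSet]
  exact (Measure.mem_support_iff_forall y).1 hy _ ((hA i).mem_nhds hyA)

lemma abs_sum_range_sub_mul_le {y : ℕ → ℝ} {c δ : ℝ} {n : ℕ} (h : ∀ i < n, |y i - c| < δ) :
    |∑ i ∈ range n, y i - n * c| ≤ n * δ :=
  calc |∑ i ∈ range n, y i - n * c| = |∑ i ∈ range n, (y i - c)| := by
        rw [Finset.sum_sub_distrib, Finset.sum_const, card_range, nsmul_eq_mul]
    _ ≤ ∑ i ∈ range n, |y i - c| := Finset.abs_sum_le_sum_abs _ _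
    _ ≤ ∑ _i ∈ range n, δ := Finset.sum_le_sum fun i hi => (h i (mem_range.1 hi)).le
    _ = n * δ := by rw [Finset.sum_const, card_range, nsmul_eq_mul]

def ageResidualRegion (a b : ℝ) : Set (ℝ × ℝ) :=
  {p | p.1 ∈ Icc 0 b ∧ p.2 ∈ Icc 0 b ∧ a ≤ p.1 + p.2 ∧ p.1 + p.2 ≤ b}

lemma isClosed_ageResidualRegion (a b : ℝ) : IsClosed (ageResidualRegion a b) :=
  have hsum : Continuous fun p : ℝ × ℝ => p.1 + p.2 := by fun_prop
  (isClosed_Icc.preimage continuous_fst).inter <| (isClosed_Icc.preimage continuous_snd).inter <|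
    (isClosed_le continuous_const hsum).inter (isClosed_le hsum continuous_const)

lemma mk_mem_ageResidualRegion {a b s x t : ℝ} (hs : s ≤ t) (hx : t < s + x) (hxab : x ∈ Icc a b) :
    (t - s, s + x - t) ∈ ageResidualRegion a b := by
  obtain ⟨hxa, hxb⟩ := hxab
  refine ⟨⟨?_, ?_⟩, ⟨?_, ?_⟩, ?_, ?_⟩ <;> linarith

lemma ageResidualRegion_subset_closure {a b : ℝ} (hb : 0 < b) :
    ageResidualRegion a b ⊆
      closure {p : ℝ × ℝ | 0 < p.1 ∧ 0 < p.2 ∧ a ≤ p.1 + p.2 ∧ p.1 + p.2 ≤ b} := by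
  intro p hp
  have hq : a ≤ b / 2 + b / 2 := by linarith [hp.2.2.1, hp.2.2.2]
  refine closure_mono ?_ (segment_subset_closure_openSegment (left_mem_segment ℝ p (b / 2, b / 2)))
  rintro _ ⟨α, β, hα, hβ, hαβ, rfl⟩
  obtain ⟨⟨hu, -⟩, ⟨hv, -⟩, hsa, hsb⟩ := hp
  simp only [mem_ofPred_eq, Prod.fst_add, Prod.snd_add, Prod.smul_fst, Prod.smul_snd, smul_eq_mul]
  refine ⟨by positivity, by positivity, ?_, ?_⟩ <;> nlinarith

lemma dist_ageResidual_lt {y : ℕ → ℝ} {c x δ t : ℝ} {k : ℕ} (hy : ∀ i < k, |y i - c| < δ)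
    (hx : |y k - x| < δ) :
    dist (t - ∑ i ∈ range k, y i, ∑ i ∈ range (k + 1), y i - t) (t - k * c, k * c + x - t) <
      (k + 1) * δ := by
  have hsum := abs_sum_range_sub_mul_le hy
  rw [abs_le] at hsum
  rw [abs_lt] at hx
  rw [Prod.dist_eq, Real.dist_eq, Real.dist_eq, Finset.sum_range_succ, max_lt_iff, abs_lt, abs_lt]
  refine ⟨⟨?_, ?_⟩, ?_, ?_⟩ <;> linarith

section Renewal

variable {Ω : Type*} {m : MeasurableSpace Ω} {μ : Measure Ω}

lemma support_map_ageResidual_subset {Y Z : Ω → ℝ} (hY : Measurable Y) (hZ : Measurable Z)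
    {a b t : ℝ} (hZab : ∀ᵐ ω ∂μ, Z ω ∈ Icc a b) :
    ((μ.restrict {ω | Y ω ≤ t ∧ t < Y ω + Z ω}).map
      fun ω => (t - Y ω, Y ω + Z ω - t)).support ⊆ ageResidualRegion a b := by
  have hE : MeasurableSet {ω | Y ω ≤ t ∧ t < Y ω + Z ω} :=
    (measurableSet_le hY measurable_const).inter (measurableSet_lt measurable_const (hY.add hZ))
  refine Measure.support_subset_of_isClosed (isClosed_ageResidualRegion a b) ?_
  refine (ae_map_iff (by fun_prop) (isClosed_ageResidualRegion a b).measurableSet).2 ?_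
  filter_upwards [ae_restrict_mem hE, ae_restrict_of_ae hZab] with ω hω hZω
  exact mk_mem_ageResidualRegion hω.1 hω.2 hZω

lemma measure_partialSum_box_pos {X : ℕ → Ω → ℝ} (hXm : ∀ n, Measurable (X n))
    (hX : iIndepFun X μ) {π : Measure ℝ} (hlaw : ∀ n, μ.map (X n) = π) {c x δ : ℝ}
    (hc : c ∈ π.support) (hx : x ∈ π.support) (hδ : 0 < δ) (k : ℕ) :
    0 < μ {ω | (∀ i < k, |X i ω - c| < δ) ∧ |X k ω - x| < δ} := by
  let y : ℕ → ℝ := fun i => if i < k then c else x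
  have hy : ∀ i, y i ∈ π.support := fun i => by by_cases hi : i < k <;> simpa [y, hi]
  refine (hX.measure_biInter_preimage_pos hXm (range (k + 1)) (A := fun i => Metric.ball (y i) δ)
    (fun _ => Metric.isOpen_ball) fun i _ =>
      ⟨y i, Metric.mem_ball_self hδ, by rw [hlaw]; exact hy i⟩).trans_le (measure_mono ?_)
  intro ω hω
  simp only [Set.mem_iInter, Set.mem_preimage, Metric.mem_ball, Real.dist_eq,
    Finset.mem_range] at hω
  exact ⟨fun i hi => by simpa [y, hi] using hω i (by omega), by simpa [y] using hω k (by omega)⟩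

lemma subset_support_map_ageResidual {X : ℕ → Ω → ℝ} (hXm : ∀ n, Measurable (X n))
    (hX : iIndepFun X μ) {π : Measure ℝ} (hlaw : ∀ n, μ.map (X n) = π) {a b : ℝ}
    (hπ : π.support = Icc a b) {k : ℕ} (hkb : b ≤ k * (b - a)) :
    {p : ℝ × ℝ | 0 < p.1 ∧ 0 < p.2 ∧ a ≤ p.1 + p.2 ∧ p.1 + p.2 ≤ b} ⊆
      ((μ.restrict {ω | ∑ i ∈ range k, X i ω ≤ k * b ∧ k * b < ∑ i ∈ range (k + 1), X i ω}).map
        fun ω => (k * b - ∑ i ∈ range k, X i ω, ∑ i ∈ range (k + 1), X i ω - k * b)).support := by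
  rintro ⟨u, v⟩ ⟨hu, hv, hsa, hsb⟩
  dsimp only at hu hv hsa hsb
  have hk : (0 : ℝ) < k := pos_of_mul_pos_left (by linarith) (by linarith : 0 ≤ b - a)
  set c := b - u / k
  have hkc : k * c = k * b - u := by rw [mul_sub, mul_div_cancel₀ _ hk.ne']
  have hc : c ∈ π.support := by
    have : u / k ≤ b - a := (div_le_iff₀' hk).2 (by linarith)
    rw [hπ]
    exact ⟨by linarith, by linarith [div_pos hu hk]⟩
  rw [Measure.mem_support_iff_forall]
  intro U hU
  obtain ⟨ε, hε, hball⟩ := Metric.mem_nhds_iff.1 hU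
  set r := min ε (min u v)
  have hr : 0 < r := lt_min hε (lt_min hu hv)
  have hδ : 0 < r / (k + 1) := by positivity
  set E := {ω | ∑ i ∈ range k, X i ω ≤ k * b ∧ k * b < ∑ i ∈ range (k + 1), X i ω}
  set f := fun ω => (k * b - ∑ i ∈ range k, X i ω, ∑ i ∈ range (k + 1), X i ω - k * b)
  have hf : Measurable f := by fun_prop
  calc 0 < μ {ω | (∀ i < k, |X i ω - c| < r / (k + 1)) ∧ |X k ω - (u + v)| < r / (k + 1)} :=
        measure_partialSum_box_pos hXm hX hlaw hc (hπ ▸ ⟨hsa, hsb⟩) hδ k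
    _ ≤ μ (f ⁻¹' U ∩ E) := by
        refine measure_mono fun ω ⟨hωc, hωx⟩ => ?_
        have hdist : dist (f ω) (u, v) < r := by
          have := dist_ageResidual_lt (y := fun i => X i ω) (t := k * b) hωc hωx
          rwa [hkc, sub_sub_cancel, show k * b - u + (u + v) - k * b = v by ring,
            mul_div_cancel₀ _ (by positivity)] at this
        refine ⟨hball (hdist.trans_le (min_le_left _ _)), ?_⟩
        rw [Prod.dist_eq, max_lt_iff, Real.dist_eq, Real.dist_eq, abs_lt, abs_lt] at hdist
        have : r ≤ u := (min_le_right _ _).trans (min_le_left _ _)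
        have : r ≤ v := (min_le_right _ _).trans (min_le_right _ _)
        constructor <;> linarith
    _ ≤ μ.restrict E (f ⁻¹' U) := Measure.le_restrict_apply _ _
    _ ≤ _ := Measure.le_map_apply hf.aemeasurable U

end Renewal

theorem stmt_15_general {Ω : Type*} {m : MeasurableSpace Ω} (μ : Measure Ω)
    (a b : ℝ) (ha : 0 < a) (hab : a < b)
    (π : Measure ℝ)
    (hπsupp : {x : ℝ | ∀ U ∈ nhds x, π U ≠ 0} = Set.Icc a b)
    (X : ℕ → Ω → ℝ) (hXm : ∀ n, Measurable (X n))
    (hiid : iIndepFun X μ)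
    (hlaw : ∀ n, Measure.map (X n) μ = π)
    (S : ℕ → Ω → ℝ) (hS : ∀ n ω, S n ω = ∑ i ∈ Finset.range n, X i ω)
    (k : ℕ) (hkb : b ≤ k * (b - a)) :
    {p : ℝ × ℝ | ∀ U ∈ nhds p,
        (Measure.map (fun ω => ((k : ℝ) * b - S k ω, S (k + 1) ω - (k : ℝ) * b))
          (μ.restrict {ω | S k ω ≤ (k : ℝ) * b ∧ (k : ℝ) * b < S (k + 1) ω})) U ≠ 0}
      = {p : ℝ × ℝ | p.1 ∈ Set.Icc 0 b ∧ p.2 ∈ Set.Icc 0 b ∧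
          a ≤ p.1 + p.2 ∧ p.1 + p.2 ≤ b} := by
  have hb : 0 < b := ha.trans hab
  rw [Measure.setOf_forall_nhds_ne_zero] at hπsupp
  have hXk : ∀ᵐ ω ∂μ, X k ω ∈ Icc a b :=
    ae_of_ae_map (hXm k).aemeasurable (by rw [hlaw, ← hπsupp]; exact Measure.support_mem_ae)
  simp only [hS, Measure.setOf_forall_nhds_ne_zero]
  refine Subset.antisymm ?_ ?_
  · simp only [Finset.sum_range_succ]
    exact support_map_ageResidual_subset (by fun_prop) (hXm k) hXk
  · exact (ageResidualRegion_subset_closure hb).trans (Measure.isClosed_support.closure_subset_iff.2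
      (subset_support_map_ageResidual hXm hiid hlaw hπsupp hkb))

theorem stmt_15 {Ω : Type*} {m : MeasurableSpace Ω} (μ : Measure Ω) [IsProbabilityMeasure μ]
    (a b : ℝ) (ha : 0 < a) (hab : a < b)
    (π : Measure ℝ) [IsProbabilityMeasure π]
    (hπsupp : {x : ℝ | ∀ U ∈ nhds x, π U ≠ 0} = Set.Icc a b)
    (X : ℕ → Ω → ℝ) (hXm : ∀ n, Measurable (X n))
    (hiid : iIndepFun X μ)
    (hlaw : ∀ n, Measure.map (X n) μ = π)
    (S : ℕ → Ω → ℝ) (hS : ∀ n ω, S n ω = ∑ i ∈ Finset.range n, X i ω)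
    (k : ℕ) (hk : 2 ≤ k) (hkb : b ≤ k * (b - a)) :
    {p : ℝ × ℝ | ∀ U ∈ nhds p,
        (Measure.map (fun ω => ((k : ℝ) * b - S k ω, S (k + 1) ω - (k : ℝ) * b))
          (μ.restrict {ω | S k ω ≤ (k : ℝ) * b ∧ (k : ℝ) * b < S (k + 1) ω})) U ≠ 0}
      = {p : ℝ × ℝ | p.1 ∈ Set.Icc 0 b ∧ p.2 ∈ Set.Icc 0 b ∧
          a ≤ p.1 + p.2 ∧ p.1 + p.2 ≤ b} :=
  stmt_15_general (m := m) μ a b ha hab π hπsupp X hXm hiid hlaw S hS k hkb
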